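/- Let φ : ℝ → ℝ be a Schwartz function. Then ‖φ(·)² cos(2ⁿ ·)‖_{L²(ℝ)}² → (1/2) ‖φ‖_{L⁴(ℝ)}⁴ as n → ∞, and consequently for all sufficiently large n the norm ‖φ(·)² cos(2ⁿ ·)‖_{L²(ℝ)} is bounded below by (1/2) ‖φ‖_{L⁴(ℝ)}². -/

import Mathlib

open MeasureTheory Real Filter Topology

/-! Since `cos² θ = (1 + cos 2θ) / 2`, the integral `∫ (φ² cos (2ⁿ x))²` is half of `∫ φ⁴` plus
half of the oscillatory integral `∫ φ⁴ cos (2ⁿ⁺¹ x)`, and the latter tends to `0` by the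
Riemann–Lebesgue lemma. The lower bound follows because the limit `(1/2) ∫ φ⁴` eventually
exceeds `(1/4) ∫ φ⁴` (trivially so when `∫ φ⁴ = 0`). -/

theorem tendsto_integral_mul_cos_atTop {f : ℝ → ℝ} (hf : Integrable f) :
    Tendsto (fun t : ℝ => ∫ x, f x * cos (t * x)) atTop (𝓝 0) := by
  have hfreq : Tendsto (fun t : ℝ => -(t / (2 * π))) atTop (cocompact ℝ) :=
    tendsto_neg_atTop_atBot.comp (tendsto_id.atTop_div_const (by positivity))
      |>.mono_right (by rw [cocompact_eq_atBot_atTop]; exact le_sup_left)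
  have hre := (Complex.continuous_re.tendsto 0).comp
    ((Real.tendsto_integral_exp_smul_cocompact fun x => (f x : ℂ)).comp hfreq)
  rw [Complex.zero_re] at hre
  refine hre.congr fun t => ?_
  -- at frequency `-t / (2π)` the character `𝐞 (-(x w))` is `exp (i t x)`, whose real part is `cos (t x)`
  have hcoef : ∀ x : ℝ, fourierChar (-(x * -(t / (2 * π)))) • (f x : ℂ)
      = Complex.exp (↑(t * x) * Complex.I) * f x := by
    intro x
    rw [Circle.smul_def, Real.fourierChar_apply, smul_eq_mul]
    congr 4
    field_simp
  have hint : Integrable fun x : ℝ => Complex.exp (↑(t * x) * Complex.I) * f x :=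
    hf.ofReal.bdd_mul (c := 1) (by fun_prop)
      (ae_of_all _ fun x => (Complex.norm_exp_ofReal_mul_I _).le)
  simp only [Function.comp_apply, hcoef]
  rw [← RCLike.re_eq_complex_re, ← integral_re hint]
  refine integral_congr_ae (ae_of_all _ fun x => ?_)
  simp only [RCLike.re_to_complex, Complex.mul_re, Complex.exp_ofReal_mul_I_re, Complex.ofReal_re,
    Complex.ofReal_im, mul_zero, sub_zero]
  exact mul_comm _ _

theorem integral_mul_cos_sq {f : ℝ → ℝ} (hf : Integrable fun x => f x ^ 2) (t : ℝ) :
    ∫ x, (f x * cos (t * x)) ^ 2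
      = (1 / 2) * (∫ x, f x ^ 2) + (1 / 2) * ∫ x, f x ^ 2 * cos (2 * t * x) := by
  have hcos : Integrable fun x => f x ^ 2 * cos (2 * t * x) :=
    hf.mul_bdd (c := 1) (by fun_prop) (ae_of_all _ fun x => abs_cos_le_one _)
  have hpt : ∀ x, (f x * cos (t * x)) ^ 2
      = (1 / 2) * f x ^ 2 + (1 / 2) * (f x ^ 2 * cos (2 * t * x)) := by
    intro x
    rw [mul_pow, cos_sq, ← mul_assoc]
    ring
  simp_rw [hpt]
  rw [integral_add (hf.const_mul _) (hcos.const_mul _), integral_const_mul, integral_const_mul]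

theorem tendsto_integral_mul_cos_sq_atTop {f : ℝ → ℝ} (hf : Integrable fun x => f x ^ 2) :
    Tendsto (fun t : ℝ => ∫ x, (f x * cos (t * x)) ^ 2) atTop
      (𝓝 ((1 / 2) * ∫ x, f x ^ 2)) := by
  simp_rw [integral_mul_cos_sq hf]
  have hosc := (tendsto_integral_mul_cos_atTop (f := fun x => f x ^ 2) hf).comp
    (tendsto_id.const_mul_atTop (two_pos (α := ℝ)))
  have h := (tendsto_const_nhds (x := (1 / 2) * ∫ x, f x ^ 2)).add (hosc.const_mul (1 / 2))
  rwa [mul_zero, add_zero] at h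

theorem SchwartzMap.integrable_pow_of_even {E : Type*} [NormedAddCommGroup E] [NormedSpace ℝ E]
    [MeasurableSpace E] [BorelSpace E] {μ : Measure E} [μ.HasTemperateGrowth]
    (φ : SchwartzMap E ℝ) {n : ℕ} (hn : Even n) (hn0 : n ≠ 0) :
    Integrable (fun x => φ x ^ n) μ := by
  simpa [Real.norm_eq_abs, hn.pow_abs] using (φ.memLp n μ).integrable_norm_pow hn0

theorem eventually_half_mul_sqrt_le_sqrt {ι : Type*} {l : Filter ι} {a : ι → ℝ} {L : ℝ}
    (hL : 0 ≤ L) (ha : ∀ i, 0 ≤ a i) (h : Tendsto a l (𝓝 ((1 / 2) * L))) :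
    ∀ᶠ i in l, (1 / 2) * √L ≤ √(a i) := by
  have hquarter : ∀ᶠ i in l, (1 / 2) ^ 2 * L ≤ a i := by
    rcases hL.eq_or_lt with rfl | hpos
    · exact Eventually.of_forall fun i => by simpa using ha i
    · exact (h.eventually (eventually_gt_nhds (by linarith))).mono fun i => le_of_lt
  filter_upwards [hquarter] with i hi
  calc (1 / 2) * √L = √((1 / 2) ^ 2 * L) := by
        rw [sqrt_mul (by positivity), sqrt_sq (by norm_num)]
    _ ≤ √(a i) := sqrt_le_sqrt hi

/-- For a Schwartz function `φ : ℝ → ℝ`, `‖φ(·)² cos(2ⁿ·)‖_{L²}² → (1/2)‖φ‖_{L⁴}⁴`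
as `n → ∞`; consequently, for all sufficiently large `n`,
`‖φ(·)² cos(2ⁿ·)‖_{L²} ≥ (1/2) ‖φ‖_{L⁴}²`. -/
theorem l2_norm_sq_cos_tendsto_and_lower_bound (φ : SchwartzMap ℝ ℝ) :
    Tendsto (fun n : ℕ => ∫ x : ℝ, (φ x ^ 2 * Real.cos (2 ^ n * x)) ^ 2)
      atTop (nhds ((1/2) * ∫ x : ℝ, φ x ^ 4)) ∧
    ∀ᶠ n : ℕ in atTop,
      (1/2) * (∫ x : ℝ, φ x ^ 4) ^ (1/2 : ℝ)
        ≤ (∫ x : ℝ, (φ x ^ 2 * Real.cos (2 ^ n * x)) ^ 2) ^ (1/2 : ℝ) := by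
  have hsq : ∀ x, (φ x ^ 2) ^ 2 = φ x ^ 4 := fun x => by ring
  have hlim : Tendsto (fun n : ℕ => ∫ x : ℝ, (φ x ^ 2 * Real.cos (2 ^ n * x)) ^ 2)
      atTop (𝓝 ((1/2) * ∫ x : ℝ, φ x ^ 4)) := by
    have h := (tendsto_integral_mul_cos_sq_atTop (f := fun x => φ x ^ 2)
      (by simpa only [hsq] using φ.integrable_pow_of_even (by decide) four_ne_zero)).comp
      (tendsto_pow_atTop_atTop_of_one_lt (one_lt_two (α := ℝ)))
    simpa only [hsq, Function.comp_def] using h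
  refine ⟨hlim, ?_⟩
  simpa only [sqrt_eq_rpow] using eventually_half_mul_sqrt_le_sqrt
    (integral_nonneg fun x => by positivity) (fun n => integral_nonneg fun x => sq_nonneg _) hlim
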